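/- arXiv:1712.05853 — 4 statements merged into one kernel-verified Lean document; each statement's English description precedes it below -/
import Mathlib

section
/- Let m ≥ 2 be an integer, λ ≥ 1, C > 0, and ε ≥ -C·λ^{-2m/(m+1)}. Set b(x) = 1 - (x^{2m}+1)^{-1/m}. Then ∫_{-1}^{1} (λ^{-2m/(m+1)} + |b(x)+ε|)^{-1/2} dx ≤ C'·λ^{(m-1)/(m+1)} for a constant C' depending only on m and C. -/
/-!
Put `ν = λ^(-1/(m+1))`, so that `λ^(-2m/(m+1)) = ν^(2m)` and `λ^((m-1)/(m+1)) = ν^(1-m)`.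
By Bernoulli's inequality `b(x) ≥ x^(2m)/(4m)` on `[-1, 1]`. With `R = 1 + 8mC`, for
`Rν ≤ |x| ≤ 1` the shift `ε ≥ -Cν^(2m)` eats at most half of this, so the integrand is at most
`√(8m) |x|^(-m)`, whose integral over that range is `O(ν^(1-m))` because `m > 1`. On `|x| ≤ Rν`
the integrand is at most `ν^(-m)`, contributing `2Rν^(1-m)`.
-/

open Real Set intervalIntegral MeasureTheory

lemma rpow_neg_inv_le_one_sub {m : ℕ} (hm : 0 < m) {t : ℝ} (ht0 : 0 ≤ t) (ht1 : t ≤ 1) :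
    (t + 1) ^ (-(1 : ℝ) / m) ≤ 1 - t / (4 * m) := by
  have hmr : (1 : ℝ) ≤ m := by exact_mod_cast hm
  have hs : t / (4 * m) ≤ 1 / 4 := by
    rw [div_le_div_iff₀ (by positivity) (by norm_num)]; nlinarith
  apply le_of_pow_le_pow_left₀ hm.ne' (by linarith)
  rw [← rpow_natCast, ← rpow_mul (by linarith), div_mul_cancel₀ _ (by positivity), rpow_neg_one]
  calc (t + 1)⁻¹ ≤ 1 - t / 4 := by
        rw [inv_le_iff_one_le_mul₀ (by linarith)]; nlinarith
    _ = 1 + m * -(t / (4 * m)) := by field_simp; ring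
    _ ≤ (1 - t / (4 * m)) ^ m := by
        rw [sub_eq_add_neg]; exact one_add_mul_le_pow (by linarith) m

noncomputable def profile (m : ℕ) (x : ℝ) : ℝ := 1 - (x ^ (2 * m) + 1) ^ (-(1 : ℝ) / m)

lemma profile_neg (m : ℕ) (x : ℝ) : profile m (-x) = profile m x := by
  simp only [profile, (even_two_mul m).neg_pow]

lemma continuous_profile (m : ℕ) : Continuous (profile m) :=
  continuous_const.sub <| (continuous_pow _).add continuous_const |>.rpow_const
    fun x => .inl (add_pos_of_nonneg_of_pos ((even_two_mul m).pow_nonneg x) one_pos).ne'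

lemma pow_div_le_profile {m : ℕ} (hm : 0 < m) {x : ℝ} (hx : |x| ≤ 1) :
    x ^ (2 * m) / (4 * m) ≤ profile m x := by
  have h := rpow_neg_inv_le_one_sub hm ((even_two_mul m).pow_nonneg x)
    (by rw [← (even_two_mul m).pow_abs]; exact pow_le_one₀ (abs_nonneg x) hx)
  rw [profile]; linarith

lemma integral_rpow_neg_le {p a : ℝ} (hp : 1 < p) (ha : 0 < a) :
    ∫ x in a..1, x ^ (-p) ≤ a ^ (1 - p) / (p - 1) := by
  rw [integral_rpow (.inr ⟨by linarith, notMem_uIcc_of_lt ha one_pos⟩), one_rpow,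
    show -p + 1 = 1 - p by ring, ← neg_div_neg_eq, neg_sub, neg_sub]
  gcongr
  linarith

lemma integral_le_of_even_of_le_rpow_neg {g : ℝ → ℝ} (hg : Continuous g)
    (hev : ∀ x, g (-x) = g x) {M K p a : ℝ} (hM0 : 0 ≤ M) (hM : ∀ x, g x ≤ M) (hK0 : 0 ≤ K)
    (hp : 1 < p) (ha : 0 < a) (hK : ∀ x ∈ Icc a 1, g x ≤ K * x ^ (-p)) :
    ∫ x in (-1)..1, g x ≤ 2 * a * M + 2 * K * (a ^ (1 - p) / (p - 1)) := by
  have hi (u v : ℝ) : IntervalIntegrable g volume u v := hg.intervalIntegrable u v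
  have hconst {u v : ℝ} (huv : u ≤ v) : ∫ x in u..v, g x ≤ (v - u) * M := by
    simpa using integral_mono_on huv (hi u v) intervalIntegrable_const fun x _ => hM x
  have htail0 : 0 ≤ K * (a ^ (1 - p) / (p - 1)) := by
    have : 0 < p - 1 := by linarith
    positivity
  rcases le_or_gt a 1 with ha1 | ha1
  · have htail : ∫ x in a..1, g x ≤ K * (a ^ (1 - p) / (p - 1)) :=
      calc ∫ x in a..1, g x ≤ ∫ x in a..1, K * x ^ (-p) :=
            integral_mono_on ha1 (hi a 1)
              ((intervalIntegrable_rpow (.inr (notMem_uIcc_of_lt ha one_pos))).const_mul K) hK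
        _ ≤ K * (a ^ (1 - p) / (p - 1)) := by
            rw [intervalIntegral.integral_const_mul]
            exact mul_le_mul_of_nonneg_left (integral_rpow_neg_le hp ha) hK0
    have hsym : ∫ x in (-1)..(-a), g x = ∫ x in a..1, g x := by
      simpa [hev] using (integral_comp_neg (a := a) (b := 1) g).symm
    rw [← integral_add_adjacent_intervals (hi (-1) (-a)) (hi (-a) 1),
      ← integral_add_adjacent_intervals (hi (-a) a) (hi a 1), hsym]
    linarith [hconst (show -a ≤ a by linarith)]
  · nlinarith [hconst (show (-1 : ℝ) ≤ 1 by norm_num)]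

lemma pow_two_mul_rpow_neg_half {x : ℝ} (hx : 0 ≤ x) (m : ℕ) :
    (x ^ (2 * m)) ^ (-(1 : ℝ) / 2) = x ^ (-(m : ℝ)) := by
  rw [← rpow_natCast, ← rpow_mul hx]
  push_cast
  ring_nf

lemma pow_two_mul_div_rpow_neg_half {x : ℝ} (hx : 0 ≤ x) (m : ℕ) :
    (x ^ (2 * m) / (8 * m)) ^ (-(1 : ℝ) / 2) = √(8 * m) * x ^ (-(m : ℝ)) := by
  rw [div_rpow (by positivity) (by positivity), pow_two_mul_rpow_neg_half hx,
    show -(1 : ℝ) / 2 = -(1 / 2) by ring, rpow_neg (x := 8 * (m : ℝ)) (by positivity),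
    ← sqrt_eq_rpow, div_inv_eq_mul, mul_comm]

lemma pow_div_le_add_abs_profile_add {m : ℕ} (hm : 0 < m) {C ν ε x : ℝ}
    (hε : -C * ν ^ (2 * m) ≤ ε) (hx : |x| ≤ 1) (hνx : 8 * m * C * ν ^ (2 * m) ≤ x ^ (2 * m)) :
    x ^ (2 * m) / (8 * m) ≤ ν ^ (2 * m) + |profile m x + ε| := by
  have hb := pow_div_le_profile hm hx
  have hm8 : (0 : ℝ) < 8 * m := by positivity
  have hCν : C * ν ^ (2 * m) ≤ x ^ (2 * m) / (8 * m) := by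
    rw [le_div_iff₀ hm8]; linarith
  have hhalf : x ^ (2 * m) / (4 * m) = 2 * (x ^ (2 * m) / (8 * m)) := by field_simp; ring
  linarith [le_abs_self (profile m x + ε), (even_two_mul m).pow_nonneg ν]

lemma mul_rpow_one_sub_div_le {R ν p : ℝ} (hR : 1 ≤ R) (hν : 0 ≤ ν) (hp : 2 ≤ p) :
    (R * ν) ^ (1 - p) / (p - 1) ≤ ν ^ (1 - p) := by
  rw [mul_rpow (by positivity) hν]
  calc R ^ (1 - p) * ν ^ (1 - p) / (p - 1) ≤ R ^ (1 - p) * ν ^ (1 - p) :=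
        div_le_self (by positivity) (by linarith)
    _ ≤ ν ^ (1 - p) :=
        mul_le_of_le_one_left (by positivity) (rpow_le_one_of_one_le_of_nonpos hR (by linarith))

lemma integral_profile_le {m : ℕ} (hm : 2 ≤ m) {C : ℝ} (hC : 0 ≤ C) {ν ε : ℝ} (hν : 0 < ν)
    (hε : -C * ν ^ (2 * m) ≤ ε) :
    ∫ x in (-1)..1, (ν ^ (2 * m) + |profile m x + ε|) ^ (-(1 : ℝ) / 2)
      ≤ (2 * (1 + 8 * m * C) + 2 * √(8 * m)) * ν ^ (1 - (m : ℝ)) := by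
  set R : ℝ := 1 + 8 * m * C
  have hmr : (2 : ℝ) ≤ m := by exact_mod_cast hm
  have hR : 1 ≤ R := by simp only [R]; nlinarith
  have hM (x : ℝ) : (ν ^ (2 * m) + |profile m x + ε|) ^ (-(1 : ℝ) / 2) ≤ ν ^ (-(m : ℝ)) := by
    rw [← pow_two_mul_rpow_neg_half hν.le]
    exact rpow_le_rpow_of_nonpos (by positivity) (le_add_of_nonneg_right (abs_nonneg _))
      (by norm_num)
  have htail : ∀ x ∈ Icc (R * ν) 1,
      (ν ^ (2 * m) + |profile m x + ε|) ^ (-(1 : ℝ) / 2) ≤ √(8 * m) * x ^ (-(m : ℝ)) := by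
    rintro x ⟨hRx, hx1⟩
    have hx : 0 < x := by nlinarith
    have hνx : 8 * m * C * ν ^ (2 * m) ≤ x ^ (2 * m) :=
      calc 8 * m * C * ν ^ (2 * m) ≤ R ^ (2 * m) * ν ^ (2 * m) := by
            gcongr
            calc 8 * m * C ≤ R := by simp only [R]; linarith
              _ ≤ R ^ (2 * m) := le_self_pow₀ hR (by omega)
        _ ≤ x ^ (2 * m) := by rw [← mul_pow]; gcongr
    have hbase := pow_div_le_add_abs_profile_add (by omega) hε
      (abs_le.mpr ⟨by linarith, hx1⟩) hνx
    calc _ ≤ (x ^ (2 * m) / (8 * m)) ^ (-(1 : ℝ) / 2) :=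
          rpow_le_rpow_of_nonpos (by positivity) hbase (by norm_num)
      _ = √(8 * m) * x ^ (-(m : ℝ)) := pow_two_mul_div_rpow_neg_half hx.le m
  have hcont : Continuous fun x => (ν ^ (2 * m) + |profile m x + ε|) ^ (-(1 : ℝ) / 2) :=
    (continuous_const.add ((continuous_profile m).add continuous_const).abs).rpow_const
      fun x => .inl (add_pos_of_pos_of_nonneg (pow_pos hν _) (abs_nonneg _)).ne'
  have hνm : ν * ν ^ (-(m : ℝ)) = ν ^ (1 - (m : ℝ)) := by
    rw [sub_eq_add_neg, rpow_add hν, rpow_one]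
  calc _ ≤ 2 * (R * ν) * ν ^ (-(m : ℝ)) + 2 * √(8 * m) * ((R * ν) ^ (1 - (m : ℝ)) / (m - 1)) :=
        integral_le_of_even_of_le_rpow_neg hcont (fun x => by rw [profile_neg])
          (by positivity) hM (by positivity) (by linarith) (by positivity) htail
    _ ≤ 2 * R * (ν * ν ^ (-(m : ℝ))) + 2 * √(8 * m) * ν ^ (1 - (m : ℝ)) := by
        rw [show 2 * (R * ν) * ν ^ (-(m : ℝ)) = 2 * R * (ν * ν ^ (-(m : ℝ))) by ring]
        gcongr
        exact mul_rpow_one_sub_div_le hR hν.le hmr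
    _ = _ := by rw [hνm]; ring

/-- For `m ≥ 2`, `λ ≥ 1`, `C > 0`, `ε ≥ -C·λ^(-2m/(m+1))`, with
`b(x) = 1 - (x^(2m)+1)^(-1/m)`:
`∫_{-1}^{1} (λ^(-2m/(m+1)) + |b(x)+ε|)^(-1/2) dx ≤ C'·λ^((m-1)/(m+1))`
for some `C' > 0` depending only on `m` and `C`. -/
theorem stmt_7 (m : ℕ) (hm : 2 ≤ m) (C : ℝ) (hC : 0 < C)
    (b : ℝ → ℝ) (hb : ∀ x, b x = 1 - (x ^ (2 * m) + 1) ^ (-(1 : ℝ) / m)) :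
    ∃ C' > 0, ∀ lam : ℝ, 1 ≤ lam → ∀ ε : ℝ,
      -C * lam ^ (-(2 * (m : ℝ)) / (m + 1)) ≤ ε →
      ∫ x in (-1 : ℝ)..1,
          (lam ^ (-(2 * (m : ℝ)) / (m + 1)) + |b x + ε|) ^ (-(1 : ℝ) / 2)
        ≤ C' * lam ^ (((m : ℝ) - 1) / (m + 1)) := by
  obtain rfl : b = profile m := funext hb
  refine ⟨2 * (1 + 8 * m * C) + 2 * √(8 * m), by positivity, fun lam hlam ε hε => ?_⟩
  have hlam : 0 < lam := by linarith
  have hm1 : (m : ℝ) + 1 ≠ 0 := by positivity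
  have hμ : lam ^ (-(2 * (m : ℝ)) / (m + 1)) = (lam ^ (-1 / ((m : ℝ) + 1))) ^ (2 * m) := by
    rw [← rpow_natCast, ← rpow_mul hlam.le]; push_cast; field_simp
  have hL : lam ^ (((m : ℝ) - 1) / (m + 1)) = (lam ^ (-1 / ((m : ℝ) + 1))) ^ (1 - (m : ℝ)) := by
    rw [← rpow_mul hlam.le]; congr 1; ring
  rw [hμ] at hε ⊢
  rw [hL]
  exact integral_profile_le hm hC.le (rpow_pos_of_pos hlam _) hε
end

section
/- Let m ≥ 2, λ ≥ 1, δ > 0, C > 0, and ε ≥ -Cλ^{-2m/(m+1)}. With b(x) = 1 - (x^{2m}+1)^{-1/m}, ∫_{-1}^{1} |x|^{m-1+δ} · (λ^{-2m/(m+1)} + |b(x)+ε|)^{-1/2} dx ≤ C' for a constant C' depending only on m, δ, C (uniform in λ and ε). -/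
/-!
On `[-1, 1]` the profile satisfies `b x ≥ x ^ (2m) / (2m + 1)` (Bernoulli's inequality applied to
`(x ^ (2m) + 1) ^ (-1/m)`), and `ε ≥ -C μ` gives `b x ≤ |b x + ε| + |C| μ`, where
`μ = λ ^ (-2m/(m+1))`. Hence `x ^ (2m) ≤ (2m + 1)(|C| + 1)(μ + |b x + ε|)`, i.e. the factor
`|x| ^ m` absorbs the possibly large `(μ + |b x + ε|) ^ (-1/2)` uniformly in `λ` and `ε`. What
remains of the integrand is `|x| ^ (δ - 1)`, integrable since `δ > 0`.
-/

open Real Set MeasureTheory intervalIntegral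

lemma intervalIntegrable_abs_rpow {r : ℝ} (hr : -1 < r) (a b : ℝ) :
    IntervalIntegrable (fun x => |x| ^ r) volume a b := by
  have hpos : ∀ c : ℝ, 0 ≤ c → IntervalIntegrable (fun x => |x| ^ r) volume 0 c := fun c hc =>
    (intervalIntegrable_rpow' hr).congr fun x hx => by
      rw [uIoc_of_le hc] at hx
      simp only [abs_of_pos hx.1]
  suffices ∀ c : ℝ, IntervalIntegrable (fun x => |x| ^ r) volume 0 c from
    (this a).symm.trans (this b)
  intro c
  rcases le_total 0 c with hc | hc
  · exact hpos c hc
  · rw [IntervalIntegrable.iff_comp_neg, neg_zero]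
    simpa only [abs_neg] using hpos (-c) (by linarith)

lemma integral_abs_rpow_neg_self {r : ℝ} (hr : -1 < r) {c : ℝ} (hc : 0 ≤ c) :
    ∫ x in -c..c, |x| ^ r = 2 * c ^ (r + 1) / (r + 1) := by
  have hhalf : ∫ x in (0 : ℝ)..c, |x| ^ r = c ^ (r + 1) / (r + 1) := by
    rw [integral_congr (g := fun x => x ^ r) fun x hx => by
        rw [uIcc_of_le hc] at hx; simp only [abs_of_nonneg hx.1],
      integral_rpow (Or.inl hr), zero_rpow (by linarith), sub_zero]
  have hneg : ∫ x in -c..0, |x| ^ r = ∫ x in (0 : ℝ)..c, |x| ^ r := by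
    simpa only [abs_neg, neg_zero] using
      (integral_comp_neg (fun x => |x| ^ r) (a := 0) (b := c)).symm
  rw [← integral_add_adjacent_intervals (intervalIntegrable_abs_rpow hr _ _)
    (intervalIntegrable_abs_rpow hr _ _), hneg, hhalf]
  ring

lemma rpow_neg_inv_natCast_le {m : ℕ} (hm : 0 < m) {t : ℝ} (ht0 : 0 ≤ t) (ht1 : t ≤ 1) :
    (t + 1) ^ (-(1 : ℝ) / m) ≤ 1 - t / (2 * m + 1) := by
  have hm1 : (1 : ℝ) ≤ m := by exact_mod_cast hm
  have hA : 0 < 2 * (m : ℝ) + 1 := by linarith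
  have hu1 : t / (2 * m + 1) ≤ 1 := (div_le_one hA).mpr (by linarith)
  rw [← pow_le_pow_iff_left₀ (by positivity) (by linarith) hm.ne']
  have hpow : ((t + 1) ^ (-(1 : ℝ) / m)) ^ m = (t + 1)⁻¹ := by
    rw [← rpow_natCast, ← rpow_mul (by linarith), div_mul_cancel₀ _ (by positivity), rpow_neg_one]
  have hinv : (t + 1)⁻¹ ≤ 1 + m * -(t / (2 * m + 1)) := by
    rw [inv_le_iff_one_le_mul₀ (by linarith), mul_neg, ← sub_eq_add_neg, mul_div_assoc',
      one_sub_div hA.ne', div_mul_eq_mul_div, le_div_iff₀ hA]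
    have hmt : (m : ℝ) * t ≤ m := by nlinarith
    nlinarith [mul_nonneg ht0 (by linarith : (0 : ℝ) ≤ m + 1 - m * t)]
  simpa only [hpow, sub_eq_add_neg] using hinv.trans (one_add_mul_le_pow (by linarith) m)

noncomputable def wellProfile (m : ℕ) (x : ℝ) : ℝ := 1 - (x ^ (2 * m) + 1) ^ (-(1 : ℝ) / m)

lemma continuous_wellProfile (m : ℕ) : Continuous (wellProfile m) :=
  continuous_const.sub <| (by fun_prop : Continuous fun x : ℝ => x ^ (2 * m) + 1).rpow_const
    fun x => Or.inl (add_pos_of_nonneg_of_pos ((even_two_mul m).pow_nonneg x) one_pos).ne'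

lemma pow_div_le_wellProfile {m : ℕ} (hm : 0 < m) {x : ℝ} (hx : |x| ≤ 1) :
    x ^ (2 * m) / (2 * m + 1) ≤ wellProfile m x := by
  have h0 : 0 ≤ x ^ (2 * m) := (even_two_mul m).pow_nonneg x
  have h1 : x ^ (2 * m) ≤ 1 := by
    rw [pow_mul, ← sq_abs]; exact pow_le_one₀ (sq_nonneg _) (by nlinarith [abs_nonneg x])
  rw [wellProfile]
  linarith [rpow_neg_inv_natCast_le hm h0 h1]

lemma le_mul_add_abs_add_of_neg_mul_le {β ε C μ : ℝ} (hμ : 0 ≤ μ) (hε : -C * μ ≤ ε) :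
    β ≤ (|C| + 1) * (μ + |β + ε|) := by
  nlinarith [le_abs_self (β + ε), le_abs_self C, abs_nonneg C, abs_nonneg (β + ε),
    mul_le_mul_of_nonneg_right (le_abs_self C) hμ, mul_nonneg (abs_nonneg C) (abs_nonneg (β + ε))]

lemma abs_pow_mul_rpow_neg_half_le {m : ℕ} (hm : 0 < m) {x μ ε C : ℝ} (hx : |x| ≤ 1)
    (hμ : 0 < μ) (hε : -C * μ ≤ ε) :
    |x| ^ m * (μ + |wellProfile m x + ε|) ^ (-(1 : ℝ) / 2) ≤ √((2 * m + 1) * (|C| + 1)) := by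
  set s := μ + |wellProfile m x + ε|
  have hs : 0 < s := by positivity
  have hsq : x ^ (2 * m) ≤ (2 * m + 1) * (|C| + 1) * s := by
    have := (div_le_iff₀' (by positivity)).mp
      ((pow_div_le_wellProfile hm hx).trans (le_mul_add_abs_add_of_neg_mul_le hμ.le hε))
    linarith
  rw [show (-(1 : ℝ) / 2) = -(1 / 2) by ring, rpow_neg hs.le, ← sqrt_eq_rpow, ← div_eq_mul_inv,
    div_le_iff₀ (sqrt_pos.mpr hs), ← sqrt_mul (by positivity),
    le_sqrt (by positivity) (by positivity), ← abs_pow, sq_abs, ← pow_mul']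
  exact hsq

lemma abs_rpow_mul_rpow_neg_half_le {m : ℕ} (hm : 0 < m) {δ : ℝ} (hδ : 0 < δ) {x μ ε C : ℝ}
    (hx : x ∈ Icc (-1 : ℝ) 1) (hμ : 0 < μ) (hε : -C * μ ≤ ε) :
    |x| ^ ((m : ℝ) - 1 + δ) * (μ + |wellProfile m x + ε|) ^ (-(1 : ℝ) / 2) ≤
      √((2 * m + 1) * (|C| + 1)) * |x| ^ (δ - 1) := by
  have hm1 : (1 : ℝ) ≤ m := by exact_mod_cast hm
  rw [show (m : ℝ) - 1 + δ = δ - 1 + m by ring, rpow_add' (abs_nonneg x) (by linarith),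
    rpow_natCast, mul_assoc, mul_comm]
  exact mul_le_mul_of_nonneg_right (abs_pow_mul_rpow_neg_half_le hm (abs_le.mpr hx) hμ hε)
    (by positivity)

theorem stmt_8_general (m : ℕ) (hm : 2 ≤ m) (δ : ℝ) (hδ : 0 < δ) (C : ℝ)
    (b : ℝ → ℝ) (hb : ∀ x, b x = 1 - (x ^ (2 * m) + 1) ^ (-(1 : ℝ) / m)) :
    ∃ C' > 0, ∀ lam : ℝ, 1 ≤ lam → ∀ ε : ℝ,
      -C * lam ^ (-(2 * (m : ℝ)) / (m + 1)) ≤ ε →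
      ∫ x in (-1 : ℝ)..1,
          |x| ^ ((m : ℝ) - 1 + δ) *
            (lam ^ (-(2 * (m : ℝ)) / (m + 1)) + |b x + ε|) ^ (-(1 : ℝ) / 2)
        ≤ C' := by
  obtain rfl : b = wellProfile m := funext hb
  have hm0 : 0 < m := by omega
  set K := √((2 * m + 1) * (|C| + 1))
  refine ⟨K * (2 / δ), by positivity, fun lam hlam ε hε => ?_⟩
  set μ := lam ^ (-(2 * (m : ℝ)) / (m + 1))
  have hμ : 0 < μ := rpow_pos_of_pos (by linarith) _
  have hm1 : (1 : ℝ) ≤ m := by exact_mod_cast hm0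
  have hcont : Continuous fun x =>
      |x| ^ ((m : ℝ) - 1 + δ) * (μ + |wellProfile m x + ε|) ^ (-(1 : ℝ) / 2) :=
    (continuous_abs.rpow_const fun _ => Or.inr (by linarith)).mul
      ((continuous_const.add ((continuous_wellProfile m).add continuous_const).abs).rpow_const
        fun _ => Or.inl (add_pos_of_pos_of_nonneg hμ (abs_nonneg _)).ne')
  calc _ ≤ ∫ x in (-1 : ℝ)..1, K * |x| ^ (δ - 1) :=
        integral_mono_on (by norm_num) (hcont.intervalIntegrable _ _)
          ((intervalIntegrable_abs_rpow (by linarith) _ _).const_mul K)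
          fun x hx => abs_rpow_mul_rpow_neg_half_le hm0 hδ hx hμ hε
    _ = K * (2 / δ) := by
      rw [intervalIntegral.integral_const_mul,
        integral_abs_rpow_neg_self (by linarith) zero_le_one]
      simp

/-- For `m ≥ 2`, `δ > 0`, `C > 0`, `λ ≥ 1`, `ε ≥ -C·λ^(-2m/(m+1))`, with
`b(x) = 1 - (x^(2m)+1)^(-1/m)`:
`∫_{-1}^{1} |x|^(m-1+δ)·(λ^(-2m/(m+1)) + |b(x)+ε|)^(-1/2) dx ≤ C'`
for some `C' > 0` depending only on `m`, `δ`, `C` (uniform in `λ` and `ε`). -/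
theorem stmt_8 (m : ℕ) (hm : 2 ≤ m) (δ : ℝ) (hδ : 0 < δ) (C : ℝ) (hC : 0 < C)
    (b : ℝ → ℝ) (hb : ∀ x, b x = 1 - (x ^ (2 * m) + 1) ^ (-(1 : ℝ) / m)) :
    ∃ C' > 0, ∀ lam : ℝ, 1 ≤ lam → ∀ ε : ℝ,
      -C * lam ^ (-(2 * (m : ℝ)) / (m + 1)) ≤ ε →
      ∫ x in (-1 : ℝ)..1,
          |x| ^ ((m : ℝ) - 1 + δ) *
            (lam ^ (-(2 * (m : ℝ)) / (m + 1)) + |b x + ε|) ^ (-(1 : ℝ) / 2)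
        ≤ C' :=
  stmt_8_general m hm δ hδ C b hb
end

section
/- Let m ≥ 2 and b(x) = 1 - (x^{2m}+1)^{-1/m}. Then for 0 < |x| ≤ 1, (b'(x))^2 ≤ C·b(x)^{(2m-1)/m} for a constant C depending only on m. -/
/-!
Write `t = x^(2m)`. Differentiating, `b'(x) = 2 x^(2m-1) (t+1)^(-1/m-1)`, so
`b'(x)^2 ≤ 4 x^(2(2m-1)) = 4 t^((2m-1)/m)`. Conversely, by concavity of `s ↦ s^(1/m)` the
value `(t+1)^(1/m)` lies above the chord from `1` to `2^(1/m)`, which gives `b(x) ≥ c t` on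
`|x| ≤ 1` with `c = (2^(1/m) - 1)/2`; hence `t^((2m-1)/m) ≤ (b(x)/c)^((2m-1)/m)`.
-/

open Real Set

lemma one_add_mul_le_add_one_rpow {p : ℝ} (hp₀ : 0 ≤ p) (hp₁ : p ≤ 1) {t : ℝ}
    (ht₀ : 0 ≤ t) (ht₁ : t ≤ 1) : 1 + t * (2 ^ p - 1) ≤ (t + 1) ^ p := by
  have chord := (concaveOn_rpow hp₀ hp₁).2 (mem_Ici.2 zero_le_one) (mem_Ici.2 zero_le_two)
    (sub_nonneg.2 ht₁) ht₀ (sub_add_cancel 1 t)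
  simp only [smul_eq_mul, one_rpow] at chord
  rw [show (1 - t) * 1 + t * 2 = t + 1 by ring] at chord
  linarith

lemma mul_le_one_sub_add_one_rpow_neg {p : ℝ} (hp₀ : 0 ≤ p) (hp₁ : p ≤ 1) {t : ℝ}
    (ht₀ : 0 ≤ t) (ht₁ : t ≤ 1) : (2 ^ p - 1) / 2 * t ≤ 1 - (t + 1) ^ (-p) := by
  set s := (t + 1) ^ p
  have hs_lower : 1 + t * (2 ^ p - 1) ≤ s := one_add_mul_le_add_one_rpow hp₀ hp₁ ht₀ ht₁
  have hs_upper : s ≤ 2 :=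
    calc s ≤ (t + 1) ^ (1 : ℝ) := rpow_le_rpow_of_exponent_le (by linarith) hp₁
      _ ≤ 2 := by rw [rpow_one]; linarith
  have hc : (0 : ℝ) ≤ 2 ^ p - 1 := sub_nonneg.2 (one_le_rpow one_le_two hp₀)
  have hs_pos : 0 < s := by nlinarith
  calc (2 ^ p - 1) / 2 * t ≤ (s - 1) / 2 := by linarith
    _ ≤ (s - 1) / s := div_le_div_of_nonneg_left (by nlinarith) hs_pos hs_upper
    _ = 1 - (t + 1) ^ (-p) := by
      rw [rpow_neg (by linarith), sub_div, div_self hs_pos.ne', one_div]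

lemma hasDerivAt_one_sub_pow_add_one_rpow {n : ℕ} (hn : Even n) (p x : ℝ) :
    HasDerivAt (fun y : ℝ => 1 - (y ^ n + 1) ^ p)
      (-(n * x ^ (n - 1) * p * (x ^ n + 1) ^ (p - 1))) x := by
  have hpos : 0 < x ^ n + 1 := by positivity [hn.pow_nonneg x]
  exact ((hasDerivAt_const x (1 : ℝ)).sub
    (((hasDerivAt_pow n x).add_const 1).rpow_const (p := p) (Or.inl hpos.ne'))).congr_deriv
    (by ring)

lemma pow_two_mul_rpow_two_mul_sub_one_div (m : ℕ) (hm : m ≠ 0) (x : ℝ) :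
    (x ^ (2 * m)) ^ ((2 * (m : ℝ) - 1) / m) = (x ^ (2 * m - 1)) ^ 2 := by
  have hexp : (m : ℝ) * ((2 * (m : ℝ) - 1) / m) = ((2 * m - 1 : ℕ) : ℝ) := by
    rw [mul_div_cancel₀ _ (Nat.cast_ne_zero.2 hm), Nat.cast_sub (by omega)]
    push_cast; ring
  rw [pow_mul, ← rpow_natCast_mul (sq_nonneg x), hexp, rpow_natCast, ← pow_mul, ← pow_mul,
    mul_comm]

lemma sq_deriv_one_sub_rpow_le {m : ℕ} (hm : m ≠ 0) (x : ℝ) :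
    deriv (fun y : ℝ => 1 - (y ^ (2 * m) + 1) ^ (-(1 : ℝ) / m)) x ^ 2
      ≤ 4 * (x ^ (2 * m)) ^ ((2 * (m : ℝ) - 1) / m) := by
  have hcoeff : ((2 * m : ℕ) : ℝ) * (-(1 : ℝ) / m) = -2 := by
    push_cast
    field_simp
  have hderiv : deriv (fun y : ℝ => 1 - (y ^ (2 * m) + 1) ^ (-(1 : ℝ) / m)) x
      = 2 * x ^ (2 * m - 1) * (x ^ (2 * m) + 1) ^ (-(1 : ℝ) / m - 1) := by
    rw [(hasDerivAt_one_sub_pow_add_one_rpow (even_two_mul m) _ x).deriv]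
    linear_combination (-(x ^ (2 * m - 1)) * (x ^ (2 * m) + 1) ^ (-(1 : ℝ) / m - 1)) * hcoeff
  have hbase : 1 ≤ x ^ (2 * m) + 1 := by linarith [(even_two_mul m).pow_nonneg x]
  set A := (x ^ (2 * m) + 1) ^ (-(1 : ℝ) / m - 1)
  have hA₀ : 0 ≤ A := rpow_nonneg (by linarith) _
  have hA₁ : A ≤ 1 := rpow_le_one_of_one_le_of_nonpos hbase (by
    have : (0 : ℝ) ≤ 1 / m := by positivity
    rw [neg_div]; linarith)
  rw [hderiv, pow_two_mul_rpow_two_mul_sub_one_div m hm]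
  calc (2 * x ^ (2 * m - 1) * A) ^ 2 = 4 * (x ^ (2 * m - 1)) ^ 2 * A ^ 2 := by ring
    _ ≤ 4 * (x ^ (2 * m - 1)) ^ 2 :=
      mul_le_of_le_one_right (by positivity) (pow_le_one₀ hA₀ hA₁)

/-- For `m ≥ 2` and `b(x) = 1 - (x^(2m)+1)^(-1/m)`: for `0 < |x| ≤ 1`,
`(b'(x))^2 ≤ C·b(x)^((2m-1)/m)` for some `C > 0` depending only on `m`. -/
theorem stmt_10 (m : ℕ) (hm : 2 ≤ m)
    (b : ℝ → ℝ) (hb : ∀ x, b x = 1 - (x ^ (2 * m) + 1) ^ (-(1 : ℝ) / m)) :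
    ∃ C > 0, ∀ x : ℝ, 0 < |x| → |x| ≤ 1 →
      (deriv b x) ^ 2 ≤ C * (b x) ^ ((2 * (m : ℝ) - 1) / m) := by
  obtain rfl : b = fun y : ℝ => 1 - (y ^ (2 * m) + 1) ^ (-(1 : ℝ) / m) := funext hb
  have hm₀ : m ≠ 0 := by omega
  have hm' : (2 : ℝ) ≤ m := by exact_mod_cast hm
  have hp₀ : (0 : ℝ) ≤ 1 / m := by positivity
  have hp₁ : (1 : ℝ) / m ≤ 1 := div_le_one_of_le₀ (by linarith) (by positivity)
  set e := (2 * (m : ℝ) - 1) / m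
  have he : 0 ≤ e := div_nonneg (by linarith) (by positivity)
  set c := ((2 : ℝ) ^ ((1 : ℝ) / m) - 1) / 2
  have hc : 0 < c := by
    have : (1 : ℝ) < 2 ^ ((1 : ℝ) / m) := one_lt_rpow one_lt_two (by positivity)
    exact half_pos (sub_pos.2 this)
  refine ⟨4 / c ^ e, by positivity, fun x _ hx => ?_⟩
  set t := x ^ (2 * m)
  have ht₀ : 0 ≤ t := (even_two_mul m).pow_nonneg x
  have ht₁ : t ≤ 1 := by
    simpa only [t, (even_two_mul m).pow_abs] using pow_le_one₀ (n := 2 * m) (abs_nonneg x) hx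
  have hb_lower : c * t ≤ 1 - (t + 1) ^ (-(1 : ℝ) / m) := by
    simpa only [neg_div] using mul_le_one_sub_add_one_rpow_neg hp₀ hp₁ ht₀ ht₁
  calc _ ≤ 4 * t ^ e := sq_deriv_one_sub_rpow_le hm₀ x
    _ = 4 / c ^ e * (c * t) ^ e := by rw [mul_rpow hc.le ht₀]; field_simp
    _ ≤ 4 / c ^ e * (1 - (t + 1) ^ (-(1 : ℝ) / m)) ^ e := by gcongr
end

section
/- Case II energy estimate: Suppose V ∈ C¹([-1,1]) satisfies V(x) ≥ c·τ² > 0 and |V'(x)| ≤ K·V(x) on [-1,1], and φ ∈ C² is supported in [-1,1] with φ'' + Vφ = g. Then sup_x [φ'(x)² + V(x)φ(x)²] ≤ C(c,K)·‖g‖²_{L²([-1,1])}, and in particular τ‖φ‖_{L²} + ‖φ'‖_{L²} ≤ C'·‖g‖_{L²}. -/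
/-!
With `E = φ'² + V φ²`, the equation gives `E' = 2 φ' g + V' φ² ≤ (K + 1) E + g²`, and
`E (-1) = 0` because `φ` vanishes to the left of `-1`. The integrating factor `e^{-(K+1) x}`
turns this into `E ≤ e^{2(K+1)} ‖g‖²` on `[-1, 1]`; since `V ≥ c τ²`, this pointwise bound on
`φ'²` and `τ² φ²` integrates to the `L²` bounds.
-/

open Set Real

theorem eq_zero_of_tsupport_subset_Ici {α E : Type*} [TopologicalSpace α] [LinearOrder α]
    [OrderTopology α] [DenselyOrdered α] [NoMinOrder α] [TopologicalSpace E] [T2Space E]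
    [Zero E] {f : α → E} {a : α} (hf : Continuous f) (h : tsupport f ⊆ Ici a) : f a = 0 := by
  have hzero : EqOn f 0 (Iio a) := fun x hx =>
    image_eq_zero_of_notMem_tsupport fun hx' => not_le.2 hx (h hx')
  exact hzero.closure hf continuous_const (by simp [closure_Iio])

theorem le_exp_mul_integral_of_hasDerivAt_le {E E' h : ℝ → ℝ} {a s t : ℝ} (ha : 0 ≤ a)
    (hE : ∀ x ∈ Icc s t, HasDerivAt E (E' x) x) (hs : E s ≤ 0)
    (hh : Continuous h) (hh0 : ∀ x, 0 ≤ h x)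
    (bound : ∀ x ∈ Ico s t, E' x ≤ a * E x + h x) :
    ∀ x ∈ Icc s t, E x ≤ exp (a * (x - s)) * ∫ y in s..x, h y := by
  have hG : ∀ x ∈ Icc s t, HasDerivAt (fun y => exp (-a * y) * E y)
      (exp (-a * x) * (E' x - a * E x)) x := fun x hx => by
    refine ((((hasDerivAt_id x).const_mul (-a)).exp).fun_mul (hE x hx)).congr_deriv ?_
    simp only [id]
    ring
  have hB : ∀ x, HasDerivAt (fun y => exp (-a * s) * ∫ z in s..y, h z) (exp (-a * s) * h x) x :=
    fun x => ((hh.integral_hasStrictDerivAt s x).hasDerivAt).const_mul _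
  have hGB : ∀ x ∈ Icc s t, exp (-a * x) * E x ≤ exp (-a * s) * ∫ y in s..x, h y := by
    refine image_le_of_deriv_right_le_deriv_boundary
      (fun x hx => (hG x hx).continuousAt.continuousWithinAt)
      (fun x hx => (hG x (Ico_subset_Icc_self hx)).hasDerivWithinAt) ?_
      (fun x _ => (hB x).continuousAt.continuousWithinAt) (fun x _ => (hB x).hasDerivWithinAt) ?_
    · simpa using mul_nonpos_of_nonneg_of_nonpos (exp_pos _).le hs
    · intro x hx
      calc exp (-a * x) * (E' x - a * E x) ≤ exp (-a * x) * h x := by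
            gcongr; linarith [bound x hx]
        _ ≤ exp (-a * s) * h x := by
            gcongr ?_ * _
            · exact hh0 x
            · exact exp_le_exp.2 (by nlinarith [hx.1])
  intro x hx
  have := hGB x hx
  rwa [← le_div_iff₀' (exp_pos _), mul_div_right_comm, ← exp_sub,
    show -a * s - -a * x = a * (x - s) by ring] at this

theorem mul_sqrt_integral_sq_le {f : ℝ → ℝ} {a b w M : ℝ} (hab : a ≤ b) (hw : 0 ≤ w)
    (h : ∀ x ∈ Icc a b, w ^ 2 * f x ^ 2 ≤ M) :
    w * √(∫ x in a..b, f x ^ 2) ≤ √((b - a) * M) := by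
  rw [← sqrt_sq hw, ← sqrt_mul (sq_nonneg w), ← intervalIntegral.integral_const_mul]
  refine sqrt_le_sqrt ((le_abs_self _).trans ?_)
  have := intervalIntegral.norm_integral_le_of_norm_le_const (a := a) (b := b)
    (f := fun x => w ^ 2 * f x ^ 2) (C := M) fun x hx => by
      rw [uIoc_of_le hab] at hx
      rw [Real.norm_of_nonneg (by positivity)]
      exact h x (Ioc_subset_Icc_self hx)
  rw [abs_of_nonneg (sub_nonneg.2 hab)] at this
  simpa [Real.norm_eq_abs, mul_comm] using this

noncomputable def energy (V φ : ℝ → ℝ) (x : ℝ) : ℝ := deriv φ x ^ 2 + V x * φ x ^ 2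

theorem hasDerivAt_energy {V φ : ℝ → ℝ} {x : ℝ} (hV : DifferentiableAt ℝ V x)
    (hφ : DifferentiableAt ℝ φ x) (hφ' : DifferentiableAt ℝ (deriv φ) x) :
    HasDerivAt (energy V φ)
      (2 * deriv φ x * (deriv (deriv φ) x + V x * φ x) + deriv V x * φ x ^ 2) x := by
  refine ((hφ'.hasDerivAt.fun_pow 2).add
    (hV.hasDerivAt.fun_mul (hφ.hasDerivAt.fun_pow 2))).congr_deriv ?_
  ring

theorem two_mul_add_le_energy {p q f v v' K : ℝ} (hK : 0 ≤ K) (hv : 0 ≤ v) (hv' : v' ≤ K * v) :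
    2 * p * f + v' * q ^ 2 ≤ (K + 1) * (p ^ 2 + v * q ^ 2) + f ^ 2 := by
  nlinarith [sq_nonneg (p - f), mul_nonneg hK (sq_nonneg p), mul_nonneg hv (sq_nonneg q),
    mul_le_mul_of_nonneg_right hv' (sq_nonneg q)]

theorem energy_le_exp_mul_integral_sq {K : ℝ} {V φ g : ℝ → ℝ} (hK : 0 ≤ K)
    (hV : ContDiff ℝ 1 V) (hV0 : ∀ x ∈ Icc (-1 : ℝ) 1, 0 ≤ V x)
    (hV' : ∀ x ∈ Icc (-1 : ℝ) 1, |deriv V x| ≤ K * V x) (hφ : ContDiff ℝ 2 φ)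
    (hsupp : tsupport φ ⊆ Icc (-1) 1) (hode : ∀ x, deriv (deriv φ) x + V x * φ x = g x) :
    ∀ x ∈ Icc (-1 : ℝ) 1, energy V φ x ≤ exp (2 * (K + 1)) * ∫ y in (-1 : ℝ)..1, g y ^ 2 := by
  have hφ' : ContDiff ℝ 1 (deriv φ) := hφ.deriv'
  have hg : Continuous g := by
    rw [← funext hode]
    exact (hφ'.continuous_deriv le_rfl).add (hV.continuous.mul hφ.continuous)
  have hE : ∀ x, HasDerivAt (energy V φ) (2 * deriv φ x * g x + deriv V x * φ x ^ 2) x := by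
    intro x
    rw [← hode x]
    exact hasDerivAt_energy (hV.differentiable one_ne_zero x) (hφ.differentiable (by norm_num) x)
      (hφ'.differentiable one_ne_zero x)
  have hE0 : energy V φ (-1) = 0 := by
    have hsupp' : tsupport φ ⊆ Ici (-1) := hsupp.trans Icc_subset_Ici_self
    simp [energy, eq_zero_of_tsupport_subset_Ici hφ.continuous hsupp',
      eq_zero_of_tsupport_subset_Ici hφ'.continuous (tsupport_deriv_subset.trans hsupp')]
  have h := le_exp_mul_integral_of_hasDerivAt_le (add_nonneg hK zero_le_one)
    (fun x _ => hE x) hE0.le (hg.pow 2) (fun x => sq_nonneg (g x))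
    (fun x hx => two_mul_add_le_energy hK (hV0 x (Ico_subset_Icc_self hx))
      (abs_le.1 (hV' x (Ico_subset_Icc_self hx))).2)
  intro x hx
  calc energy V φ x ≤ exp ((K + 1) * (x - -1)) * ∫ y in (-1 : ℝ)..x, g y ^ 2 := h x hx
    _ ≤ exp (2 * (K + 1)) * ∫ y in (-1 : ℝ)..1, g y ^ 2 := by
      gcongr ?_ * ?_
      · exact intervalIntegral.integral_nonneg hx.1 fun y _ => sq_nonneg (g y)
      · exact exp_le_exp.2 (by nlinarith [hx.2])
      · exact intervalIntegral.integral_mono_interval le_rfl hx.1 hx.2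
          (Filter.Eventually.of_forall fun y => sq_nonneg (g y))
          ((hg.pow 2).intervalIntegrable _ _)

/-- Case II energy estimate: for all `c, K > 0` there are `C, C' > 0` such that for
all `τ ≥ 1`, if `V` is `C¹` with `V ≥ c·τ²` and `|V'| ≤ K·V` on `[-1,1]`, and `φ`
is `C²`, supported in `[-1,1]`, with `φ'' + Vφ = g`, then
`sup_x [φ'(x)² + V(x)φ(x)²] ≤ C·‖g‖²` and `τ‖φ‖ + ‖φ'‖ ≤ C'·‖g‖`. -/
theorem stmt_14 (c K : ℝ) (hc : 0 < c) (hK : 0 < K) :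
    ∃ C > 0, ∃ C' > 0, ∀ τ : ℝ, 1 ≤ τ → ∀ (V φ g : ℝ → ℝ),
      ContDiff ℝ 1 V →
      (∀ x ∈ Set.Icc (-1 : ℝ) 1, c * τ ^ 2 ≤ V x) →
      (∀ x ∈ Set.Icc (-1 : ℝ) 1, |deriv V x| ≤ K * V x) →
      ContDiff ℝ 2 φ →
      (tsupport φ ⊆ Set.Icc (-1) 1) →
      (∀ x : ℝ, deriv (deriv φ) x + V x * φ x = g x) →
      (∀ x ∈ Set.Icc (-1 : ℝ) 1,
        (deriv φ x) ^ 2 + V x * (φ x) ^ 2 ≤ C * ∫ y in (-1 : ℝ)..1, (g y) ^ 2) ∧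
      τ * Real.sqrt (∫ y in (-1 : ℝ)..1, (φ y) ^ 2) +
          Real.sqrt (∫ y in (-1 : ℝ)..1, (deriv φ y) ^ 2)
        ≤ C' * Real.sqrt (∫ y in (-1 : ℝ)..1, (g y) ^ 2) := by
  refine ⟨exp (2 * (K + 1)), exp_pos _, √(2 * exp (2 * (K + 1)) / c) + √(2 * exp (2 * (K + 1))),
    ?_, ?_⟩
  · positivity
  intro τ hτ V φ g hV hVlb hV' hφ hsupp hode
  set C := exp (2 * (K + 1))
  set I := ∫ y in (-1 : ℝ)..1, g y ^ 2
  have hV0 : ∀ x ∈ Icc (-1 : ℝ) 1, 0 ≤ V x := fun x hx =>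
    (by positivity : 0 ≤ c * τ ^ 2).trans (hVlb x hx)
  have hE : ∀ x ∈ Icc (-1 : ℝ) 1, energy V φ x ≤ C * I :=
    energy_le_exp_mul_integral_sq hK.le hV hV0 hV' hφ hsupp hode
  refine ⟨hE, ?_⟩
  have hφL2 : τ * √(∫ y in (-1 : ℝ)..1, φ y ^ 2) ≤ √(2 * C / c) * √I := by
    rw [← sqrt_mul (by positivity)]
    refine (mul_sqrt_integral_sq_le (M := C * I / c) (by norm_num) (by positivity)
      fun x hx => ?_).trans_eq (by ring_nf)
    have hEx : deriv φ x ^ 2 + V x * φ x ^ 2 ≤ C * I := hE x hx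
    rw [le_div_iff₀' hc, ← mul_assoc]
    nlinarith [hVlb x hx, sq_nonneg (deriv φ x), sq_nonneg (φ x)]
  have hφ'L2 : √(∫ y in (-1 : ℝ)..1, deriv φ y ^ 2) ≤ √(2 * C) * √I := by
    rw [← sqrt_mul (by positivity : (0 : ℝ) ≤ 2 * C)]
    have := mul_sqrt_integral_sq_le (f := deriv φ) (w := 1) (M := C * I)
      (by norm_num : (-1 : ℝ) ≤ 1) zero_le_one fun x hx => by
        have hEx : deriv φ x ^ 2 + V x * φ x ^ 2 ≤ C * I := hE x hx
        nlinarith [hV0 x hx, sq_nonneg (φ x)]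
    rw [one_mul] at this
    exact this.trans_eq (by ring_nf)
  linarith
end
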